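/- Let X be a CFG-space over a Boolean ring B, let 0, 0' ∈ X, let {x₁,…,xₙ} be a base of (X,0) and {y₁,…,yₘ} a base of (X,0'). Then n = m, d(0,xᵢ) = d(0',yᵢ) for i = 1,…,n, and there exists an isometry f : X → X with f(0) = 0' and f(xᵢ) = yᵢ for i = 1,…,n. -/

import Mathlib

/-- The order on a Boolean ring: `a ≤ b` iff `a * b = a`. -/
def ble {B : Type} [BooleanRing B] (a b : B) : Prop := a * b = a

/-- The join on a Boolean ring: `a ∨ b = a + b + a * b`. -/
def bjoin {B : Type} [BooleanRing B] (a b : B) : B := a + b + a * b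

/-- A Boolean metric space over a Boolean ring `B`: `d x y = 0` iff `x = y`,
`d` is symmetric, and `d x z ≤ d x y ∨ d y z`. -/
structure BooleanMetric (B : Type) [BooleanRing B] (X : Type) where
  d : X → X → B
  d_eq_zero : ∀ x y, d x y = 0 ↔ x = y
  d_symm : ∀ x y, d x y = d y x
  d_tri : ∀ x y z, ble (d x z) (bjoin (d x y) (d y z))

/-- The coefficients `a i` have pairwise zero products. -/
def PairwiseOrthCoeffs {B : Type} [BooleanRing B] {k : ℕ} (a : Fin k → B) : Prop :=
  ∀ i j, i ≠ j → a i * a j = 0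

/-- `x` is a convex combination of `x₁, …, xₖ` with coefficients `a₁, …, aₖ`,
i.e. `aᵢ · d(x, xᵢ) = 0` for all `i`. -/
def IsConvComb {B X : Type} [BooleanRing B] (m : BooleanMetric B X) {k : ℕ}
    (a : Fin k → B) (xs : Fin k → X) (x : X) : Prop :=
  ∀ i, a i * m.d x (xs i) = 0

/-- A subset `S` is convex: every convex combination of points of `S` (with pairwise
disjoint coefficients summing to `1`) exists in `S`. -/
def IsConvexSubspace {B X : Type} [BooleanRing B] (m : BooleanMetric B X) (S : Set X) : Prop :=
  ∀ (k : ℕ) (a : Fin k → B) (xs : Fin k → X), (∀ i, xs i ∈ S) →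
    PairwiseOrthCoeffs a → (∑ i, a i) = 1 → ∃ x ∈ S, IsConvComb m a xs x

/-- A subset `S` is a CFG-space: it is convex and there are finitely many points of `S`
of which every point of `S` is a convex combination. -/
def IsCFGSubspace {B X : Type} [BooleanRing B] (m : BooleanMetric B X) (S : Set X) : Prop :=
  IsConvexSubspace m S ∧
  ∃ (k : ℕ) (xs : Fin k → X), (∀ i, xs i ∈ S) ∧
    ∀ x ∈ S, ∃ a : Fin k → B, PairwiseOrthCoeffs a ∧ (∑ i, a i) = 1 ∧ IsConvComb m a xs x

/-- A contractive map: `d(f x, f y) ≤ d(x, y)`. -/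
def Contractive {B X Y : Type} [BooleanRing B] (mX : BooleanMetric B X) (mY : BooleanMetric B Y)
    (f : X → Y) : Prop :=
  ∀ x y, ble (mY.d (f x) (f y)) (mX.d x y)

/-- `sm a x` is the convex combination `a x + (a+1) 0` of `x` and the base point `z`
with coefficients `a` and `a + 1`. -/
def IsScalarMul {B X : Type} [BooleanRing B] (m : BooleanMetric B X) (z : X)
    (sm : B → X → X) : Prop :=
  ∀ a x, a * m.d (sm a x) x = 0 ∧ (a + 1) * m.d (sm a x) z = 0

/-- `x ⊥ y`, i.e. `x ⋆ y = (d(x,y)+1) x = 0`. -/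
def Orth {B X : Type} [BooleanRing B] (m : BooleanMetric B X) (z : X) (sm : B → X → X)
    (x y : X) : Prop :=
  sm (m.d x y + 1) x = z

/-- `x` is the convex combination of `0, x₁, …, xₖ` with coefficients
`a₀ = 1 + a₁ + ⋯ + aₖ, a₁, …, aₖ`. -/
def ConvCombWithZero {B X : Type} [BooleanRing B] (m : BooleanMetric B X) (z : X) {k : ℕ}
    (a : Fin k → B) (xs : Fin k → X) (x : X) : Prop :=
  PairwiseOrthCoeffs a ∧ (∀ i, a i * m.d x (xs i) = 0) ∧ (1 + ∑ i, a i) * m.d x z = 0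

/-- `x₁, …, xₖ` is a referential of `(X, z)`: the `xᵢ` are nonzero, pairwise orthogonal,
and every point of `X` is a convex combination of `0, x₁, …, xₖ`. -/
def IsReferential {B X : Type} [BooleanRing B] (m : BooleanMetric B X) (z : X)
    (sm : B → X → X) {k : ℕ} (xs : Fin k → X) : Prop :=
  (∀ i, xs i ≠ z) ∧ (∀ i j, i ≠ j → Orth m z sm (xs i) (xs j)) ∧
  ∀ x : X, ∃ a : Fin k → B, ConvCombWithZero m z a xs x

/-- The whole space is a convex closure of the subset `S`: it is convex and every point
is a convex combination of points of `S`. -/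
def IsConvexClosure {B X : Type} [BooleanRing B] (m : BooleanMetric B X) (S : Set X) : Prop :=
  IsConvexSubspace m Set.univ ∧
  ∀ x : X, ∃ (k : ℕ) (a : Fin k → B) (xs : Fin k → X),
    (∀ i, xs i ∈ S) ∧ PairwiseOrthCoeffs a ∧ (∑ i, a i) = 1 ∧ IsConvComb m a xs x

/-- A finite set `R` is a referential of `(X, z)` (set version). -/
def IsReferentialSet {B X : Type} [BooleanRing B] (m : BooleanMetric B X) (z : X)
    (sm : B → X → X) (R : Finset X) : Prop :=
  z ∉ R ∧ (∀ x ∈ R, ∀ y ∈ R, x ≠ y → Orth m z sm x y) ∧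
  ∀ u : X, ∃ a : X → B,
    (∀ x ∈ R, ∀ y ∈ R, x ≠ y → a x * a y = 0) ∧
    (∀ x ∈ R, a x * m.d u x = 0) ∧ (1 + ∑ x ∈ R, a x) * m.d u z = 0

/-! Modulo a prime ideal `P` of `B` (in the stalk at `P`), the relation `d(u, v) ∈ P` is an
equivalence on `X`, and a referential `x₁, …, xₙ` of `(X, 0)` meets exactly the classes of `0` and
of the `xᵢ` with `|xᵢ| ∉ P`, which are pairwise distinct. So the number `r_P` of these `i` is one
less than the number of classes and does not depend on the referential. For a base, the `i` with
`|xᵢ| ∉ P` are the first `r_P` ones, so the length of a base and the norms `|xᵢ|` are determined by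
`P ↦ r_P`. Every point `u` has coordinates `|xᵢ| (1 + d(u, xᵢ))`, which determine `d(u, v)` modulo
every `P`; the isometry sends the point with given coordinates in the first base to the point with
the same coordinates in the second. -/

namespace BooleanRing

variable {B : Type} [BooleanRing B] {P : Ideal B} {x y : B}

lemma one_add_mem_of_notMem [hP : P.IsPrime] (hx : x ∉ P) : 1 + x ∈ P :=
  (hP.mem_or_mem (mul_one_add_self x ▸ P.zero_mem)).resolve_left hx

lemma mem_of_mul_eq_zero [hP : P.IsPrime] (h : x * y = 0) (hx : x ∉ P) : y ∈ P :=
  (hP.mem_or_mem (h ▸ P.zero_mem)).resolve_left hx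

lemma add_mem_iff [P.IsPrime] : x + y ∈ P ↔ (x ∈ P ↔ y ∈ P) := by
  constructor
  · intro h
    constructor
    · intro hx
      simpa only [add_right_comm, add_self, zero_add] using P.add_mem h hx
    · intro hy
      simpa only [add_assoc, add_self, add_zero] using P.add_mem h hy
  · intro h
    by_cases hx : x ∈ P
    · exact P.add_mem hx (h.mp hx)
    · have hy : y ∉ P := mt h.mpr hx
      have := P.add_mem (one_add_mem_of_notMem hx) (one_add_mem_of_notMem hy)
      rwa [add_add_add_comm, add_self, zero_add] at this

lemma one_add_mem_iff [P.IsPrime] : 1 + x ∈ P ↔ x ∉ P :=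
  ⟨fun h hx => P.one_notMem (by simpa only [add_assoc, add_self, add_zero] using P.add_mem h hx),
    one_add_mem_of_notMem⟩

lemma exists_isPrime_notMem (hx : x ≠ 0) : ∃ P : Ideal B, P.IsPrime ∧ x ∉ P := by
  by_contra! h
  exact hx ((isIdempotentElem x).eq_zero_of_isNilpotent (nilpotent_iff_mem_prime.mpr h))

lemma eq_of_forall_isPrime_mem_iff (h : ∀ P : Ideal B, P.IsPrime → (x ∈ P ↔ y ∈ P)) :
    x = y := by
  by_contra hne
  obtain ⟨P, hP, hxy⟩ := exists_isPrime_notMem (mt (add_eq_zero' x y).mp hne)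
  exact hxy (add_mem_iff.mpr (h P hP))

lemma eq_zero_of_forall_isPrime_mem (h : ∀ P : Ideal B, P.IsPrime → x ∈ P) : x = 0 :=
  eq_of_forall_isPrime_mem_iff fun P hP => iff_of_true (h P hP) P.zero_mem

end BooleanRing

lemma Fin.lt_card_iff_of_antitone {n : ℕ} {p : Fin n → Prop} (hp : Antitone p) (k : Fin n) :
    p k ↔ (k : ℕ) < Nat.card {i // p i} := by
  classical
  rw [Nat.subtype_card (Finset.univ.filter p) (by simp)]
  constructor
  · intro hk
    have : Finset.Iic k ⊆ Finset.univ.filter p := fun i hi =>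
      Finset.mem_filter.mpr ⟨Finset.mem_univ i, hp (Finset.mem_Iic.mp hi) hk⟩
    have := Finset.card_le_card this
    rw [Fin.card_Iic] at this
    omega
  · intro hlt
    by_contra hk
    have : Finset.univ.filter p ⊆ Finset.Iio k := fun i hi =>
      Finset.mem_Iio.mpr (lt_of_not_ge fun hki => hk (hp hki (Finset.mem_filter.mp hi).2))
    have := Finset.card_le_card this
    rw [Fin.card_Iio] at this
    omega

open BooleanRing

namespace BooleanMetric

variable {B X : Type} [BooleanRing B] (mS : BooleanMetric B X)

lemma dist_mem_trans (P : Ideal B) {x y w : X} (hxy : mS.d x y ∈ P) (hyw : mS.d y w ∈ P) :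
    mS.d x w ∈ P := by
  have h : mS.d x w * bjoin (mS.d x y) (mS.d y w) = mS.d x w := mS.d_tri x y w
  rw [← h]
  exact P.mul_mem_left _ (P.add_mem (P.add_mem hxy hyw) (P.mul_mem_right _ hxy))

def stalkSetoid (P : Ideal B) : Setoid X where
  r u v := mS.d u v ∈ P
  iseqv :=
    { refl := fun u => ((mS.d_eq_zero u u).mpr rfl).symm ▸ P.zero_mem
      symm := fun h => mS.d_symm _ _ ▸ h
      trans := mS.dist_mem_trans P }

variable (z : X) {n : ℕ} (xs : Fin n → X)

/-- The coefficient of `xᵢ` in the canonical expression of `u` as a convex combination of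
`0, x₁, …, xₙ`: in Boolean-algebra notation, `|xᵢ| ∧ ¬d(u, xᵢ)`. -/
def coord (u : X) (i : Fin n) : B :=
  mS.d z (xs i) * (1 + mS.d u (xs i))

lemma coord_mul_dist (u : X) (i : Fin n) :
    mS.coord z xs u i * mS.d z (xs i) = mS.coord z xs u i := by
  unfold coord
  linear_combination (1 + mS.d u (xs i)) * mul_self (mS.d z (xs i))

lemma coord_self_eq_zero : mS.coord z xs z = 0 :=
  funext fun _ => mul_one_add_self _

lemma coord_notMem_iff (P : Ideal B) [hP : P.IsPrime] (u : X) (i : Fin n) :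
    mS.coord z xs u i ∉ P ↔ mS.d z (xs i) ∉ P ∧ mS.d u (xs i) ∈ P := by
  rw [coord, hP.mul_mem_iff_mem_or_mem, not_or, one_add_mem_iff, not_not]

lemma exists_convCombWithZero (hconv : IsConvexSubspace mS Set.univ) {b : Fin n → B}
    (hb : PairwiseOrthCoeffs b) : ∃ v, ConvCombWithZero mS z b xs v := by
  have hb₀ : ∀ j, (1 + ∑ i, b i) * b j = 0 := by
    intro j
    have hsum : (∑ i, b i) * b j = b j := by
      rw [Finset.sum_mul, Finset.sum_eq_single j (fun s _ hs => hb s j hs) (by simp), mul_self]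
    linear_combination hsum + add_self (b j)
  have hpair : PairwiseOrthCoeffs (Fin.cons (1 + ∑ i, b i) b : Fin (n + 1) → B) := by
    intro i j hij
    cases i using Fin.cases <;> cases j using Fin.cases
    · exact absurd rfl hij
    · simpa using hb₀ _
    · simpa [mul_comm] using hb₀ _
    · simpa using hb _ _ (mt (congrArg Fin.succ) hij)
  have hsum : ∑ i, (Fin.cons (1 + ∑ i, b i) b : Fin (n + 1) → B) i = 1 := by
    rw [Fin.sum_cons]
    linear_combination add_self (∑ i, b i)
  obtain ⟨v, -, hv⟩ := hconv (n + 1) _ (Fin.cons z xs) (fun _ => Set.mem_univ _) hpair hsum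
  exact ⟨v, hb, fun i => by simpa using hv i.succ, by simpa using hv 0⟩

lemma norm_notMem_iff_lt_card
    (hbase : ∀ i j : Fin n, i ≤ j → ble (mS.d z (xs j)) (mS.d z (xs i)))
    (P : Ideal B) (k : Fin n) :
    mS.d z (xs k) ∉ P ↔ (k : ℕ) < Nat.card {i // mS.d z (xs i) ∉ P} := by
  refine Fin.lt_card_iff_of_antitone (p := fun i => mS.d z (xs i) ∉ P) (fun i j hij hj hi => ?_) k
  exact hj (hbase i j hij ▸ P.mul_mem_left _ hi)

end BooleanMetric

namespace ConvCombWithZero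

variable {B X : Type} [BooleanRing B] {mS : BooleanMetric B X} {z : X} {n : ℕ} {xs : Fin n → X}

lemma exists_near (P : Ideal B) [P.IsPrime] {a : Fin n → B} {u : X}
    (ha : ConvCombWithZero mS z a xs u) :
    (∃ s, a s ∉ P ∧ mS.d u (xs s) ∈ P) ∨ mS.d u z ∈ P := by
  by_cases hall : ∀ s, a s ∈ P
  · have hsum : ∑ s, a s ∈ P := P.sum_mem fun s _ => hall s
    exact Or.inr (mem_of_mul_eq_zero ha.2.2 (one_add_mem_iff.not.mpr (not_not.mpr hsum)))
  · push Not at hall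
    obtain ⟨s, hs⟩ := hall
    exact Or.inl ⟨s, hs, mem_of_mul_eq_zero (ha.2.1 s) hs⟩

end ConvCombWithZero

namespace IsReferential

open BooleanMetric

variable {B X : Type} [BooleanRing B] {mS : BooleanMetric B X} {z : X} {sm : B → X → X}
  {n : ℕ} {xs : Fin n → X}

/-- Orthogonality of `xᵢ` and `xⱼ` says `|xᵢ| ≤ d(xᵢ, xⱼ)`. -/
lemma norm_mul_dist (hsm : IsScalarMul mS z sm) (href : IsReferential mS z sm xs) {i j : Fin n}
    (hij : i ≠ j) : mS.d z (xs i) * mS.d (xs i) (xs j) = mS.d z (xs i) := by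
  have h := (hsm (mS.d (xs i) (xs j) + 1) (xs i)).1
  rw [show sm _ (xs i) = z from href.2.1 i j hij] at h
  linear_combination h - add_self (mS.d z (xs i))

lemma dist_notMem {P : Ideal B} [P.IsPrime] (hsm : IsScalarMul mS z sm)
    (href : IsReferential mS z sm xs) {i j : Fin n} (hij : i ≠ j) (hi : mS.d z (xs i) ∉ P) :
    mS.d (xs i) (xs j) ∉ P := by
  intro h
  rw [← href.norm_mul_dist hsm hij] at hi
  exact hi (P.mul_mem_left _ h)

lemma exists_near (P : Ideal B) [P.IsPrime] (href : IsReferential mS z sm xs) (u : X) :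
    (∃ i, mS.d z (xs i) ∉ P ∧ mS.d u (xs i) ∈ P) ∨ mS.d u z ∈ P := by
  obtain ⟨a, ha⟩ := href.2.2 u
  rcases ha.exists_near P with ⟨i, -, hi⟩ | hz
  · by_cases hx : mS.d z (xs i) ∈ P
    · exact Or.inr (mS.dist_mem_trans P hi (mS.d_symm z _ ▸ hx))
    · exact Or.inl ⟨i, hx, hi⟩
  · exact Or.inr hz

lemma coord_eq_of_convCombWithZero (hsm : IsScalarMul mS z sm)
    (href : IsReferential mS z sm xs) {a : Fin n → B} {u : X}
    (ha : ConvCombWithZero mS z a xs u) (i : Fin n) :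
    mS.coord z xs u i = a i * mS.d z (xs i) := by
  refine eq_of_forall_isPrime_mem_iff fun P hP => ?_
  rw [← not_iff_not, coord_notMem_iff mS z xs P, hP.mul_mem_iff_mem_or_mem, not_or]
  constructor
  · rintro ⟨hi, hui⟩
    refine ⟨fun hai => ?_, hi⟩
    rcases ha.exists_near P with ⟨s, has, hus⟩ | huz
    · have hsi : i ≠ s := fun h => has (h ▸ hai)
      exact href.dist_notMem hsm hsi hi (mS.dist_mem_trans P (mS.d_symm u _ ▸ hui) hus)
    · exact hi (mS.dist_mem_trans P (mS.d_symm u z ▸ huz) hui)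
  · rintro ⟨hai, hi⟩
    exact ⟨hi, mem_of_mul_eq_zero (ha.2.1 i) hai⟩

lemma coord_pairwise (hsm : IsScalarMul mS z sm) (href : IsReferential mS z sm xs) (u : X) :
    PairwiseOrthCoeffs (mS.coord z xs u) := by
  intro i j hij
  refine eq_zero_of_forall_isPrime_mem fun P hP => ?_
  rw [hP.mul_mem_iff_mem_or_mem, or_iff_not_and_not]
  rintro ⟨hci, hcj⟩
  obtain ⟨hi, hui⟩ := (coord_notMem_iff mS z xs P u i).mp hci
  obtain ⟨-, huj⟩ := (coord_notMem_iff mS z xs P u j).mp hcj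
  exact href.dist_notMem hsm hij hi (mS.dist_mem_trans P (mS.d_symm u _ ▸ hui) huj)

lemma dist_mem_iff (P : Ideal B) [P.IsPrime] (href : IsReferential mS z sm xs) (u v : X) :
    mS.d u v ∈ P ↔ ∀ i, (mS.coord z xs u i ∈ P ↔ mS.coord z xs v i ∈ P) := by
  constructor
  · intro huv i
    rw [← not_iff_not, coord_notMem_iff mS z xs P, coord_notMem_iff mS z xs P]
    exact and_congr_right fun _ =>
      ⟨mS.dist_mem_trans P (mS.d_symm u v ▸ huv), mS.dist_mem_trans P huv⟩
  · intro h
    rcases href.exists_near P u with ⟨i, hi, hui⟩ | huz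
    · have hvi := (coord_notMem_iff mS z xs P v i).mp (mt (h i).mpr
        ((coord_notMem_iff mS z xs P u i).mpr ⟨hi, hui⟩))
      exact mS.dist_mem_trans P hui (mS.d_symm v _ ▸ hvi.2)
    rcases href.exists_near P v with ⟨j, hj, hvj⟩ | hvz
    · have huj := (coord_notMem_iff mS z xs P u j).mp (mt (h j).mp
        ((coord_notMem_iff mS z xs P v j).mpr ⟨hj, hvj⟩))
      exact absurd (mS.dist_mem_trans P (mS.d_symm u z ▸ huz) huj.2) hj
    · exact mS.dist_mem_trans P huz (mS.d_symm v z ▸ hvz)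

lemma coord_injective (href : IsReferential mS z sm xs) : Function.Injective (mS.coord z xs) := by
  intro u v h
  refine (mS.d_eq_zero u v).mp (eq_zero_of_forall_isPrime_mem fun P hP => ?_)
  exact (href.dist_mem_iff P u v).mpr fun i => by rw [h]

lemma coord_apply_self (hsm : IsScalarMul mS z sm) (href : IsReferential mS z sm xs)
    (k : Fin n) :
    mS.coord z xs (xs k) = Pi.single k (mS.d z (xs k)) := by
  funext j
  by_cases hjk : j = k
  · subst hjk
    simp [coord, (mS.d_eq_zero _ _).mpr rfl]
  · rw [Pi.single_eq_of_ne hjk, coord, mS.d_symm (xs k)]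
    linear_combination href.norm_mul_dist hsm hjk + add_self (mS.d z (xs j))

lemma exists_coord_eq (hconv : IsConvexSubspace mS Set.univ) (hsm : IsScalarMul mS z sm)
    (href : IsReferential mS z sm xs) {b : Fin n → B} (hb : PairwiseOrthCoeffs b)
    (hb_le : ∀ i, b i * mS.d z (xs i) = b i) : ∃ v, mS.coord z xs v = b := by
  obtain ⟨v, hv⟩ := mS.exists_convCombWithZero z xs hconv hb
  exact ⟨v, funext fun i => (href.coord_eq_of_convCombWithZero hsm hv i).trans (hb_le i)⟩

lemma bijective_mk_stalk (P : Ideal B) [P.IsPrime] (hsm : IsScalarMul mS z sm)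
    (href : IsReferential mS z sm xs) :
    Function.Bijective fun t : Option {i // mS.d z (xs i) ∉ P} =>
      (⟦t.elim z fun i => xs i.1⟧ : Quotient (mS.stalkSetoid P)) := by
  constructor
  · intro t s hts
    have h : mS.d (t.elim z fun i => xs i.1) (s.elim z fun i => xs i.1) ∈ P :=
      Quotient.exact hts
    match t, s with
    | none, none => rfl
    | none, some j => exact absurd h j.2
    | some i, none => exact absurd (mS.d_symm z _ ▸ h) i.2
    | some i, some j =>
      by_cases hij : i.1 = j.1
      · rw [Subtype.ext hij]
      · exact absurd h (href.dist_notMem hsm hij i.2)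
  · intro q
    induction q using Quotient.inductionOn with | h u => ?_
    rcases href.exists_near P u with ⟨i, hi, hui⟩ | huz
    · exact ⟨some ⟨i, hi⟩, Quotient.sound (show mS.d (xs i) u ∈ P from mS.d_symm u _ ▸ hui)⟩
    · exact ⟨none, Quotient.sound (show mS.d z u ∈ P from mS.d_symm u z ▸ huz)⟩

lemma card_quotient_stalkSetoid (P : Ideal B) [P.IsPrime] (hsm : IsScalarMul mS z sm)
    (href : IsReferential mS z sm xs) :
    Nat.card (Quotient (mS.stalkSetoid P)) = Nat.card {i // mS.d z (xs i) ∉ P} + 1 := by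
  rw [← Nat.card_congr (Equiv.ofBijective _ (href.bijective_mk_stalk P hsm)), Finite.card_option]

variable {z' : X} {sm' : B → X → X} {m : ℕ} {ys : Fin m → X}

lemma card_notMem_eq (P : Ideal B) [P.IsPrime] (hsm : IsScalarMul mS z sm)
    (href : IsReferential mS z sm xs) (hsm' : IsScalarMul mS z' sm')
    (href' : IsReferential mS z' sm' ys) :
    Nat.card {i // mS.d z (xs i) ∉ P} = Nat.card {j // mS.d z' (ys j) ∉ P} := by
  have := href.card_quotient_stalkSetoid P hsm
  have := href'.card_quotient_stalkSetoid P hsm'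
  omega

lemma length_le_of_base (hsm : IsScalarMul mS z sm) (href : IsReferential mS z sm xs)
    (hbase : ∀ i j : Fin n, i ≤ j → ble (mS.d z (xs j)) (mS.d z (xs i)))
    (hsm' : IsScalarMul mS z' sm') (href' : IsReferential mS z' sm' ys) : n ≤ m := by
  rcases n with _ | n
  · exact Nat.zero_le m
  obtain ⟨P, hP, hlast⟩ :=
    exists_isPrime_notMem fun h => href.1 (Fin.last n) ((mS.d_eq_zero _ _).mp h).symm
  have hlt := (mS.norm_notMem_iff_lt_card z xs hbase P (Fin.last n)).mp hlast
  rw [href.card_notMem_eq P hsm hsm' href'] at hlt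
  have hle := (Finite.card_subtype_le fun j => mS.d z' (ys j) ∉ P).trans_eq (Nat.card_fin m)
  rw [Fin.val_last] at hlt
  omega

lemma norm_eq_of_base {ys : Fin n → X} (hsm : IsScalarMul mS z sm)
    (href : IsReferential mS z sm xs)
    (hbase : ∀ i j : Fin n, i ≤ j → ble (mS.d z (xs j)) (mS.d z (xs i)))
    (hsm' : IsScalarMul mS z' sm') (href' : IsReferential mS z' sm' ys)
    (hbase' : ∀ i j : Fin n, i ≤ j → ble (mS.d z' (ys j)) (mS.d z' (ys i))) (i : Fin n) :
    mS.d z (xs i) = mS.d z' (ys i) := by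
  refine eq_of_forall_isPrime_mem_iff fun P hP => ?_
  rw [← not_iff_not, mS.norm_notMem_iff_lt_card z xs hbase,
    mS.norm_notMem_iff_lt_card z' ys hbase', href.card_notMem_eq P hsm hsm' href']

theorem exists_isometry_of_norm_eq (hconv : IsConvexSubspace mS Set.univ) {ys : Fin n → X}
    (hsm : IsScalarMul mS z sm) (href : IsReferential mS z sm xs)
    (hsm' : IsScalarMul mS z' sm') (href' : IsReferential mS z' sm' ys)
    (hnorm : ∀ i, mS.d z (xs i) = mS.d z' (ys i)) :
    ∃ f : X → X, Function.Bijective f ∧ (∀ u v, mS.d (f u) (f v) = mS.d u v) ∧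
      f z = z' ∧ ∀ i, f (xs i) = ys i := by
  have transfer : ∀ u, ∃ v, mS.coord z' ys v = mS.coord z xs u := fun u =>
    href'.exists_coord_eq hconv hsm' (href.coord_pairwise hsm u)
      fun i => hnorm i ▸ mS.coord_mul_dist z xs u i
  choose f hf using transfer
  have hiso : ∀ u v, mS.d (f u) (f v) = mS.d u v := fun u v =>
    eq_of_forall_isPrime_mem_iff fun P hP => by
      rw [href'.dist_mem_iff P, href.dist_mem_iff P, hf, hf]
  refine ⟨f, ⟨fun u v huv => ?_, fun w => ?_⟩, hiso, ?_, fun i => ?_⟩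
  · rwa [← mS.d_eq_zero, ← hiso, mS.d_eq_zero]
  · obtain ⟨u, hu⟩ := href.exists_coord_eq hconv hsm (href'.coord_pairwise hsm' w)
      fun i => (hnorm i).symm ▸ mS.coord_mul_dist z' ys w i
    exact ⟨u, href'.coord_injective (by rw [hf, hu])⟩
  · exact href'.coord_injective (by rw [hf, coord_self_eq_zero, coord_self_eq_zero])
  · exact href'.coord_injective <| by
      rw [hf, href.coord_apply_self hsm, href'.coord_apply_self hsm', hnorm]

end IsReferential

/-- Uniqueness of bases: if `x₁,…,xₙ` is a base of `(X, z)` and `y₁,…,yₘ` a base of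
`(X, z')`, then `n = m`, `|xᵢ| = |yᵢ|`, and there is an isometry `f : X → X` with
`f z = z'` and `f xᵢ = yᵢ`. -/
theorem stmt19 {B X : Type} [BooleanRing B] (mS : BooleanMetric B X)
    (hX : IsCFGSubspace mS Set.univ)
    (z z' : X) (sm sm' : B → X → X)
    (hsm : IsScalarMul mS z sm) (hsm' : IsScalarMul mS z' sm')
    {n m : ℕ} (xs : Fin n → X) (ys : Fin m → X)
    (hxref : IsReferential mS z sm xs)
    (hxbase : ∀ i j : Fin n, i ≤ j → ble (mS.d z (xs j)) (mS.d z (xs i)))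
    (hyref : IsReferential mS z' sm' ys)
    (hybase : ∀ i j : Fin m, i ≤ j → ble (mS.d z' (ys j)) (mS.d z' (ys i))) :
    ∃ h : n = m,
      (∀ i : Fin n, mS.d z (xs i) = mS.d z' (ys (Fin.cast h i))) ∧
      ∃ f : X → X, Function.Bijective f ∧ (∀ x y, mS.d (f x) (f y) = mS.d x y) ∧
        f z = z' ∧ ∀ i : Fin n, f (xs i) = ys (Fin.cast h i) := by
  obtain rfl : n = m := le_antisymm (hxref.length_le_of_base hsm hxbase hsm' hyref)
    (hyref.length_le_of_base hsm' hybase hsm hxref)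
  have hnorm := hxref.norm_eq_of_base hsm hxbase hsm' hyref hybase
  obtain ⟨f, hf, hiso, hfz, hfx⟩ := hxref.exists_isometry_of_norm_eq hX.1 hsm hsm' hyref hnorm
  exact ⟨rfl, by simpa using hnorm, f, hf, hiso, hfz, by simpa using hfx⟩
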